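/- arXiv:2107.01244 — 3 statements merged into one kernel-verified Lean document; each statement's English description precedes it below -/
import Mathlib

section
/- Fix y ∈ ℝ^d, a vector a ∈ ℝ^d, a matrix b ∈ ℝ^{d×m}, a vector c ∈ ℝ^k, and a symmetric positive definite matrix R ∈ ℝ^{m×m}, and define H(α) := ½|c|² + ½ αᵀ R α + yᵀ(a + b α). Let e_1, …, e_m denote the standard basis of ℝ^m and let α* = -R^{-1} bᵀ y be the minimizer of H. Then for every i ∈ {1, …, m}: H(R^{-1} e_i) - H(0) - ½ (R^{-1})_{ii} = yᵀ b R^{-1} e_i = -⟨α*, e_i⟩. Consequently, the m+1 oracle evaluations H(0), H(R^{-1}e_1), …, H(R^{-1}e_m) determine the minimizer α* exactly. -/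
/-! Since `R (R⁻¹ eᵢ) = eᵢ`, the quadratic part of `H(R⁻¹ eᵢ) - H(0)` is `½ (R⁻¹)ᵢᵢ`; what
remains is the linear part `yᵀ b R⁻¹ eᵢ = (R⁻¹ bᵀ y)ᵢ`, using that `R⁻¹` is symmetric. -/

open Matrix

namespace Matrix

variable {n α : Type*} [Fintype n]

theorem IsSymm.dotProduct_mulVec_comm [CommSemiring α] {A : Matrix n n α} (hA : A.IsSymm)
    (u v : n → α) : u ⬝ᵥ (A *ᵥ v) = (A *ᵥ u) ⬝ᵥ v := by
  rw [dotProduct_mulVec, ← mulVec_transpose, hA.eq]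

theorem inv_mulVec_single_dotProduct_mulVec_self [DecidableEq n] [CommRing α]
    {A : Matrix n n α} (hA : IsUnit A.det) (i : n) :
    (A⁻¹ *ᵥ Pi.single i 1) ⬝ᵥ (A *ᵥ (A⁻¹ *ᵥ Pi.single i 1)) = A⁻¹ i i := by
  rw [mulVec_mulVec, mul_nonsing_inv _ hA, one_mulVec, dotProduct_single_one, mulVec_single_one]
  rfl

end Matrix

theorem apply_sub_apply_zero_of_quadratic {K p q r : Type*} [Field K] [Fintype p] [Fintype q]
    [Fintype r] (y a : p → K) (b : Matrix p q K) (c : r → K) (R : Matrix q q K)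
    (H : (q → K) → K)
    (hH : ∀ α, H α = (1 / 2 : K) * (c ⬝ᵥ c) + (1 / 2 : K) * (α ⬝ᵥ (R *ᵥ α))
      + y ⬝ᵥ (a + b *ᵥ α)) (v : q → K) :
    H v - H 0 = (1 / 2 : K) * (v ⬝ᵥ (R *ᵥ v)) + y ⬝ᵥ (b *ᵥ v) := by
  simp only [hH, mulVec_zero, dotProduct_zero, add_zero, dotProduct_add]
  ring

/-- With `H(α) = ½|c|² + ½ αᵀRα + yᵀ(a + bα)` and minimizer
`α* = -R⁻¹bᵀy`, for each standard basis vector `e_i` of `ℝ^m`: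
`H(R⁻¹e_i) - H(0) - ½(R⁻¹)_{ii} = yᵀ b R⁻¹ e_i = -⟨α*, e_i⟩`, so that the `m+1` oracle
evaluations `H(0), H(R⁻¹e_1), …, H(R⁻¹e_m)` determine `α*` exactly. -/
theorem stmt6 {d m k : ℕ} (y a : Fin d → ℝ) (b : Matrix (Fin d) (Fin m) ℝ)
    (c : Fin k → ℝ) (R : Matrix (Fin m) (Fin m) ℝ) (hR : R.PosDef)
    (H : (Fin m → ℝ) → ℝ)
    (hH : ∀ α, H α = (1 / 2 : ℝ) * (c ⬝ᵥ c) + (1 / 2 : ℝ) * (α ⬝ᵥ (R *ᵥ α))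
      + y ⬝ᵥ (a + b *ᵥ α))
    (αstar : Fin m → ℝ) (hαstar : αstar = -(R⁻¹ *ᵥ (bᵀ *ᵥ y))) :
    ∀ i : Fin m,
      (H (R⁻¹ *ᵥ Pi.single i 1) - H 0 - (1 / 2 : ℝ) * R⁻¹ i i
          = y ⬝ᵥ (b *ᵥ (R⁻¹ *ᵥ Pi.single i 1)))
      ∧ (y ⬝ᵥ (b *ᵥ (R⁻¹ *ᵥ Pi.single i 1)) = -(αstar ⬝ᵥ Pi.single i 1)) := by
  intro i
  have hdet : IsUnit R.det := (isUnit_iff_isUnit_det R).mp hR.isUnit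
  have hRinv : R⁻¹.IsSymm := (isHermitian_iff_isSymm.mp hR.1).inv
  refine ⟨?_, ?_⟩
  · rw [apply_sub_apply_zero_of_quadratic y a b c R H hH,
      inv_mulVec_single_dotProduct_mulVec_self hdet]
    ring
  · rw [dotProduct_mulVec, ← mulVec_transpose, hRinv.dotProduct_mulVec_comm, hαstar,
      neg_dotProduct, neg_neg]
end

section
/- Let S̄ ∈ ℝ^{d×d} be symmetric positive definite, n̄ ∈ ℝ^d, and C ∈ ℝ^{k×d}. Let p : ℝ^d → ℝ be the Gaussian density p(x) = (2π)^{-d/2} (det S̄)^{-1/2} exp(-½ (x - n̄)ᵀ S̄^{-1} (x - n̄)), and define the affine vector field V(x) := ½ S̄ Cᵀ C (x + n̄). Then V solves the Poisson equation: for every x ∈ ℝ^d, -(1/p(x)) ∇·(p V)(x) = ½|Cx|² - ½ Tr(Cᵀ C (S̄ + n̄ n̄ᵀ)). -/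
/-!
Since `∇·(pV) = p ∇·V + ∇p·V` and the Gaussian satisfies `∇p = -p S̄⁻¹(x - n̄)`, the density
cancels: `-(1/p) ∇·(pV) = (x - n̄)ᵀ S̄⁻¹ V(x) - ∇·V`. For the affine field,
`S̄⁻¹ V(x) = ½ CᵀC (x + n̄)` and `∇·V = ½ Tr(S̄ CᵀC) = ½ Tr(CᵀC S̄)`, and symmetry of `CᵀC` gives
`(x - n̄)ᵀ CᵀC (x + n̄) = |Cx|² - n̄ᵀ CᵀC n̄ = |Cx|² - Tr(CᵀC n̄n̄ᵀ)`.
-/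

open Matrix

/-- Partial derivative in the `i`-th coordinate direction. -/
noncomputable def pd {d : ℕ} (i : Fin d) (f : (Fin d → ℝ) → ℝ) (x : Fin d → ℝ) : ℝ :=
  fderiv ℝ f x (Pi.single i 1)

/-- Divergence `∇·V = Σ_i ∂V_i/∂x_i` of a vector field. -/
noncomputable def divV {d : ℕ} (V : (Fin d → ℝ) → (Fin d → ℝ)) (x : Fin d → ℝ) : ℝ :=
  ∑ i, pd i (fun y => V y i) x

section Divergence

variable {d : ℕ} {V : (Fin d → ℝ) → (Fin d → ℝ)} {x : Fin d → ℝ}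

theorem divV_eq_trace {L : (Fin d → ℝ) →L[ℝ] (Fin d → ℝ)} (hV : HasFDerivAt V L x) :
    divV V x = LinearMap.trace ℝ _ (L : (Fin d → ℝ) →ₗ[ℝ] (Fin d → ℝ)) := by
  rw [LinearMap.trace_eq_matrix_trace ℝ (Pi.basisFun ℝ (Fin d)), LinearMap.toMatrix_eq_toMatrix',
    Matrix.trace, divV]
  refine Finset.sum_congr rfl fun i _ => ?_
  rw [pd, (hasFDerivAt_pi'.1 hV i).fderiv]
  simp

-- The derivative of `f • V` is `f x • L + f'.smulRight (V x)`, and the rank-one map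
-- `f'.smulRight v` has trace `f' v`.
theorem divV_smul {f : (Fin d → ℝ) → ℝ} {f' : (Fin d → ℝ) →L[ℝ] ℝ}
    {L : (Fin d → ℝ) →L[ℝ] (Fin d → ℝ)} (hf : HasFDerivAt f f' x) (hV : HasFDerivAt V L x) :
    divV (fun y => f y • V y) x = f x * divV V x + f' (V x) := by
  rw [divV_eq_trace (hf.fun_smul hV), divV_eq_trace hV]
  simp

theorem hasFDerivAt_mulVec_add (M : Matrix (Fin d) (Fin d) ℝ) (b : Fin d → ℝ) :
    HasFDerivAt (fun y => M *ᵥ y + b) (LinearMap.toContinuousLinearMap (toLin' M)) x :=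
  (LinearMap.toContinuousLinearMap (toLin' M)).hasFDerivAt.add_const b

theorem divV_mulVec_add (M : Matrix (Fin d) (Fin d) ℝ) (b : Fin d → ℝ) :
    divV (fun y => M *ᵥ y + b) x = M.trace := by
  rw [divV_eq_trace (hasFDerivAt_mulVec_add M b)]
  simp

end Divergence

section QuadraticForm

variable {ι R : Type*} [Fintype ι] [CommRing R]

theorem Matrix.IsSymm.dotProduct_mulVec_comm_s10 {A : Matrix ι ι R} (hA : A.IsSymm) (v w : ι → R) :
    v ⬝ᵥ A *ᵥ w = w ⬝ᵥ A *ᵥ v := by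
  rw [dotProduct_mulVec, ← mulVec_transpose, hA.eq, dotProduct_comm]

theorem Matrix.IsSymm.sub_dotProduct_mulVec_add {B : Matrix ι ι R} (hB : B.IsSymm) (x n : ι → R) :
    (x - n) ⬝ᵥ B *ᵥ (x + n) = x ⬝ᵥ B *ᵥ x - n ⬝ᵥ B *ᵥ n := by
  rw [mulVec_add, dotProduct_add, sub_dotProduct, sub_dotProduct, hB.dotProduct_mulVec_comm_s10 n x]
  ring

theorem Matrix.trace_mul_vecMulVec_self (B : Matrix ι ι R) (n : ι → R) :
    trace (B * vecMulVec n n) = n ⬝ᵥ B *ᵥ n := by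
  rw [mul_vecMulVec, trace_vecMulVec, dotProduct_comm]

theorem Matrix.dotProduct_transpose_mul_mulVec {κ : Type*} [Fintype κ] (C : Matrix κ ι R)
    (x : ι → R) : x ⬝ᵥ (Cᵀ * C) *ᵥ x = C *ᵥ x ⬝ᵥ C *ᵥ x := by
  rw [← mulVec_mulVec, dotProduct_mulVec, vecMul_transpose]

variable [DecidableEq ι]

noncomputable def Matrix.toContinuousLinearMap₂' (A : Matrix ι ι ℝ) :
    (ι → ℝ) →L[ℝ] (ι → ℝ) →L[ℝ] ℝ :=
  LinearMap.toContinuousBilinearMap (toLinearMap₂' ℝ A : (ι → ℝ) →ₗ[ℝ] (ι → ℝ) →ₗ[ℝ] ℝ)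

@[simp]
theorem Matrix.toContinuousLinearMap₂'_apply (A : Matrix ι ι ℝ) (v w : ι → ℝ) :
    A.toContinuousLinearMap₂' v w = v ⬝ᵥ A *ᵥ w :=
  toLinearMap₂'_apply' A v w

theorem hasFDerivAt_dotProduct_mulVec_self {A : Matrix ι ι ℝ} (hA : A.IsSymm) (v : ι → ℝ) :
    HasFDerivAt (fun w => w ⬝ᵥ A *ᵥ w) ((2 : ℝ) • A.toContinuousLinearMap₂' v) v := by
  have hB := A.toContinuousLinearMap₂'.hasFDerivAt_of_bilinear (hasFDerivAt_id v)
    (hasFDerivAt_id v)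
  simp only [toContinuousLinearMap₂'_apply, id] at hB
  refine hB.congr_fderiv ?_
  ext w
  simp [hA.dotProduct_mulVec_comm_s10 w v, two_mul]

theorem hasFDerivAt_gaussian {A : Matrix ι ι ℝ} (hA : A.IsSymm) (c : ℝ) (m x : ι → ℝ) :
    HasFDerivAt (fun y => c * Real.exp (-(1 / 2) * ((y - m) ⬝ᵥ A *ᵥ (y - m))))
      (-(c * Real.exp (-(1 / 2) * ((x - m) ⬝ᵥ A *ᵥ (x - m)))) •
        A.toContinuousLinearMap₂' (x - m)) x := by
  have hQ := (hasFDerivAt_dotProduct_mulVec_self hA (x - m)).comp x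
    ((hasFDerivAt_id x).sub_const m)
  refine (((hQ.const_mul (-(1 / 2))).exp).const_mul c).congr_fderiv ?_
  ext h
  simp only [Function.comp_apply, id_eq, ContinuousLinearMap.comp_id, _root_.smul_apply,
    smul_eq_mul]
  ring

end QuadraticForm

/-- Let `p` be the Gaussian density with mean `n̄` and covariance `S̄ ≻ 0`,
and `V(x) = ½ S̄ CᵀC (x + n̄)`. Then `V` solves the Poisson equation
`-(1/p) ∇·(pV) = ½|Cx|² - ½ Tr(CᵀC(S̄ + n̄n̄ᵀ))`. -/
theorem stmt10 {d k : ℕ}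
    (Sbar : Matrix (Fin d) (Fin d) ℝ) (hS : Sbar.PosDef) (nbar : Fin d → ℝ)
    (C : Matrix (Fin k) (Fin d) ℝ)
    (p : (Fin d → ℝ) → ℝ)
    (hp : ∀ x, p x = (2 * Real.pi) ^ (-(d : ℝ) / 2) * Sbar.det ^ (-(1 : ℝ) / 2)
      * Real.exp (-(1 / 2 : ℝ) * ((x - nbar) ⬝ᵥ (Sbar⁻¹ *ᵥ (x - nbar)))))
    (V : (Fin d → ℝ) → (Fin d → ℝ))
    (hV : ∀ x, V x = (1 / 2 : ℝ) • ((Sbar * (Cᵀ * C)) *ᵥ (x + nbar))) :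
    ∀ x : Fin d → ℝ,
      -(1 / p x) * divV (fun y => p y • V y) x
        = (1 / 2 : ℝ) * ((C *ᵥ x) ⬝ᵥ (C *ᵥ x))
          - (1 / 2 : ℝ) * Matrix.trace (Cᵀ * C * (Sbar + vecMulVec nbar nbar)) := by
  intro x
  set M := Sbar * (Cᵀ * C)
  have hp' := hasFDerivAt_gaussian (isHermitian_iff_isSymm.1 hS.isHermitian).inv
    ((2 * Real.pi) ^ (-(d : ℝ) / 2) * Sbar.det ^ (-(1 : ℝ) / 2)) nbar x
  simp only [← hp] at hp'
  have hV_affine : V = fun y => ((1 / 2 : ℝ) • M) *ᵥ y + (1 / 2 : ℝ) • (M *ᵥ nbar) := by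
    funext y; rw [hV, mulVec_add, smul_add, smul_mulVec]
  have hdivV : divV V x = (1 / 2 : ℝ) * trace M := by
    rw [hV_affine, divV_mulVec_add, trace_smul, smul_eq_mul]
  have hpx : p x ≠ 0 := by
    rw [hp]
    exact (mul_pos (mul_pos (by positivity) (Real.rpow_pos_of_pos hS.det_pos _))
      (Real.exp_pos _)).ne'
  have hgrad : Sbar⁻¹ *ᵥ V x = (1 / 2 : ℝ) • (Cᵀ * C) *ᵥ (x + nbar) := by
    rw [hV, mulVec_smul, mulVec_mulVec, ← Matrix.mul_assoc,
      nonsing_inv_mul _ (isUnit_iff_ne_zero.2 hS.det_pos.ne'), Matrix.one_mul]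
  have hCC : (Cᵀ * C).IsSymm := (transpose_mul _ _).trans (by rw [transpose_transpose])
  rw [divV_smul hp' (hV_affine ▸ hasFDerivAt_mulVec_add _ _), hdivV]
  simp only [_root_.smul_apply, toContinuousLinearMap₂'_apply, smul_eq_mul]
  calc _ = (x - nbar) ⬝ᵥ Sbar⁻¹ *ᵥ V x - (1 / 2 : ℝ) * trace M := by
        field_simp; ring
    _ = (1 / 2 : ℝ) * ((x - nbar) ⬝ᵥ (Cᵀ * C) *ᵥ (x + nbar))
          - (1 / 2 : ℝ) * trace (Cᵀ * C * Sbar) := by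
        rw [hgrad, dotProduct_smul, smul_eq_mul, trace_mul_comm]
    _ = _ := by
        rw [hCC.sub_dotProduct_mulVec_add, dotProduct_transpose_mul_mulVec, Matrix.mul_add,
          trace_add, trace_mul_vecMulVec_self]
        ring
end

section
/- Let A ∈ ℝ^{d×d}, B ∈ ℝ^{d×m}, C ∈ ℝ^{k×d}, let R ∈ ℝ^{m×m} be symmetric positive definite, and let P_T ∈ ℝ^{d×d} be symmetric positive definite. Suppose P : [0,T] → ℝ^{d×d} is differentiable with each P_t symmetric and solves the backward DRE -dP_t/dt = Aᵀ P_t + P_t A + Cᵀ C - P_t B R^{-1} Bᵀ P_t on [0,T] with terminal condition P_T. Then P_t is positive definite for every t ∈ [0,T]. -/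
/-!
Let `ε > 0` with `P_T - ε·1` positive definite and compare `P_t` with the barrier
`β_t = ε e^{K (t - T)}`. If `P_t - β_t·1` ever fails to be positive semidefinite, take the
supremum `t₁` of such times: by continuity `P_{t₁} - β_{t₁}·1` is positive semidefinite but
singular, so `P_{t₁} v = β_{t₁} v` for some `v ≠ 0`. Along such an eigenvector the Riccati
equation becomes scalar, `d/dt vᵀP_t v = -2β vᵀAv - |Cv|² + β² vᵀBR⁻¹Bᵀv ≤ β (2a + βc) |v|²`,
where `a` and `c` are the entrywise `ℓ¹` norms of `A` and `BR⁻¹Bᵀ`. For large `K` this is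
below the barrier's rate `Kβ |v|²`, so `vᵀ(P_t - β_t·1)v < 0` just after `t₁`, a
contradiction. Hence `P_t ≥ β_t·1 > 0` on `[0, T]`.
-/

open Matrix Set Filter Topology

attribute [local instance] Matrix.normedAddCommGroup Matrix.normedSpace

namespace Matrix

lemma IsHermitian.sub_smul_one {n : Type*} [DecidableEq n] {M : Matrix n n ℝ}
    (hM : M.IsHermitian) (c : ℝ) : (M - c • 1).IsHermitian :=
  hM.sub (isHermitian_one.smul (IsSelfAdjoint.all c))

variable {n : Type*} [Fintype n]

lemma abs_dotProduct_mulVec_le (N : Matrix n n ℝ) (v : n → ℝ) :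
    |v ⬝ᵥ N *ᵥ v| ≤ (∑ i, ∑ j, |N i j|) * (v ⬝ᵥ v) := by
  have hcoord : ∀ i, |v i| ≤ √(v ⬝ᵥ v) := fun i =>
    Real.abs_le_sqrt (by simpa [dotProduct, sq] using
      Finset.single_le_sum (fun j _ => mul_self_nonneg (v j)) (Finset.mem_univ i))
  have hvv : √(v ⬝ᵥ v) * √(v ⬝ᵥ v) = v ⬝ᵥ v :=
    Real.mul_self_sqrt (Finset.sum_nonneg fun i _ => mul_self_nonneg (v i))
  calc |v ⬝ᵥ N *ᵥ v| = |∑ i, ∑ j, N i j * (v i * v j)| := by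
        simp only [dotProduct, mulVec, Finset.mul_sum]
        congr 1
        exact Finset.sum_congr rfl fun i _ => Finset.sum_congr rfl fun j _ => by ring
    _ ≤ ∑ i, ∑ j, |N i j| * (v ⬝ᵥ v) := by
        refine (Finset.abs_sum_le_sum_abs _ _).trans (Finset.sum_le_sum fun i _ =>
          (Finset.abs_sum_le_sum_abs _ _).trans (Finset.sum_le_sum fun j _ => ?_))
        rw [abs_mul, abs_mul, ← hvv]
        gcongr
        exacts [hcoord i, hcoord j]
    _ = (∑ i, ∑ j, |N i j|) * (v ⬝ᵥ v) := by simp only [Finset.sum_mul]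

lemma eventually_forall_dotProduct_mulVec_pos {M₀ : Matrix n n ℝ} (h : M₀.PosDef) :
    ∀ᶠ M in 𝓝 M₀, ∀ v ≠ 0, 0 < v ⬝ᵥ M *ᵥ v := by
  have hsphere : ∀ᶠ M in 𝓝 M₀, ∀ u ∈ Metric.sphere (0 : n → ℝ) 1, 0 < u ⬝ᵥ M *ᵥ u := by
    refine (isCompact_sphere 0 1).eventually_forall_of_forall_eventually fun u hu => ?_
    have hcont : Continuous fun p : Matrix n n ℝ × (n → ℝ) => p.2 ⬝ᵥ p.1 *ᵥ p.2 := by fun_prop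
    refine hcont.continuousAt.eventually (lt_mem_nhds ?_)
    simpa using h.dotProduct_mulVec_pos (ne_zero_of_mem_unit_sphere ⟨u, hu⟩)
  filter_upwards [hsphere] with M hM v hv
  have hnorm : 0 < ‖v‖ := norm_pos_iff.2 hv
  have hu := hM (‖v‖⁻¹ • v) (by simp [norm_smul, hnorm.ne'])
  rw [smul_dotProduct, mulVec_smul, dotProduct_smul, smul_eq_mul, smul_eq_mul] at hu
  have hinv : 0 < ‖v‖⁻¹ := inv_pos.2 hnorm
  exact pos_of_mul_pos_right (pos_of_mul_pos_right hu hinv.le) hinv.le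

lemma PosDef.eventually_posDef {α : Type*} {l : Filter α} {f : α → Matrix n n ℝ}
    {M : Matrix n n ℝ} (hM : M.PosDef) (hf : Tendsto f l (𝓝 M))
    (hherm : ∀ᶠ x in l, (f x).IsHermitian) : ∀ᶠ x in l, (f x).PosDef := by
  filter_upwards [hf.eventually (eventually_forall_dotProduct_mulVec_pos hM), hherm] with x hpos hx
  exact .of_dotProduct_mulVec_pos hx fun v hv => by simpa using hpos v hv

lemma isClosed_setOf_posSemidef : IsClosed {M : Matrix n n ℝ | M.PosSemidef} := by
  simp only [posSemidef_iff_dotProduct_mulVec, ofPred_and, ofPred_forall]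
  exact (isClosed_eq (by fun_prop) continuous_id).inter
    (isClosed_iInter fun x => isClosed_le continuous_const (by fun_prop))

open scoped ComplexOrder in
lemma PosSemidef.exists_mulVec_eq_zero_of_not_posDef {𝕜 : Type*} [RCLike 𝕜] {M : Matrix n n 𝕜}
    (hM : M.PosSemidef) (h : ¬ M.PosDef) : ∃ v ≠ 0, M *ᵥ v = 0 := by
  rw [posDef_iff_dotProduct_mulVec] at h
  push Not at h
  obtain ⟨v, hv, hle⟩ := h hM.isHermitian
  exact ⟨v, hv, (hM.dotProduct_mulVec_zero_iff v).1
    ((hM.dotProduct_mulVec_nonneg v).eq_of_not_lt hle).symm⟩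

lemma PosDef.exists_posDef_sub_smul_one [DecidableEq n] {M : Matrix n n ℝ}
    (hM : M.PosDef) : ∃ ε : ℝ, 0 < ε ∧ (M - ε • 1).PosDef := by
  have hlim : Tendsto (fun ε : ℝ => M - ε • (1 : Matrix n n ℝ)) (𝓝[>] 0) (𝓝 M) :=
    tendsto_nhdsWithin_of_tendsto_nhds
      ((by fun_prop : Continuous fun ε : ℝ => M - ε • (1 : Matrix n n ℝ)).tendsto' 0 M (by simp))
  have hev := hM.eventually_posDef hlim (.of_forall hM.isHermitian.sub_smul_one)
  obtain ⟨ε, hpos, hε⟩ := (hev.and self_mem_nhdsWithin).exists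
  exact ⟨ε, hε, hpos⟩

/-- Going backward from `b`, a continuous Hermitian family can only leave the positive
semidefinite cone through a matrix that is singular yet semidefinite on everything to its right. -/
theorem posSemidef_Icc_of_posDef_right {M : ℝ → Matrix n n ℝ} {a b : ℝ}
    (hcont : ContinuousOn M (Icc a b)) (hherm : ∀ t ∈ Icc a b, (M t).IsHermitian)
    (hb : (M b).PosDef)
    (hkernel : ∀ t ∈ Ico a b, (∀ s ∈ Ioc t b, (M s).PosSemidef) → ∀ v ≠ 0, M t *ᵥ v ≠ 0) :
    ∀ t ∈ Icc a b, (M t).PosSemidef := by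
  by_contra! hneg
  set S := {t ∈ Icc a b | ¬ (M t).PosSemidef}
  have hSsub : S ⊆ Icc a b := sep_subset _ _
  have hSbdd : BddAbove S := bddAbove_Icc.mono hSsub
  have hmem : sSup S ∈ closure S := csSup_mem_closure hneg hSbdd
  have ht₁ : sSup S ∈ Icc a b := isClosed_Icc.closure_subset_iff.2 hSsub hmem
  have hright : ∀ s ∈ Ioc (sSup S) b, (M s).PosSemidef := fun s hs =>
    by_contra fun hs' => (le_csSup hSbdd ⟨⟨ht₁.1.trans hs.1.le, hs.2⟩, hs'⟩).not_gt hs.1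
  have hnotPD : ¬ (M (sSup S)).PosDef := by
    intro hPD
    have : (𝓝[S] sSup S).NeBot := mem_closure_iff_nhdsWithin_neBot.1 hmem
    have hev := hPD.eventually_posDef (hcont _ ht₁) (eventually_nhdsWithin_of_forall hherm)
    obtain ⟨s, hsPD, hsS⟩ :=
      ((hev.filter_mono (nhdsWithin_mono _ hSsub)).and self_mem_nhdsWithin).exists
    exact hsS.2 hsPD.posSemidef
  have ht₁b : sSup S < b := ht₁.2.lt_of_ne fun h => hnotPD (h ▸ hb)
  have hPSD : (M (sSup S)).PosSemidef := by
    have : (𝓝[Ioc (sSup S) b] sSup S).NeBot := by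
      rw [nhdsWithin_Ioc_eq_nhdsGT ht₁b]; infer_instance
    exact isClosed_setOf_posSemidef.mem_of_tendsto
      ((hcont _ ht₁).mono fun s hs => ⟨ht₁.1.trans hs.1.le, hs.2⟩)
      (eventually_nhdsWithin_of_forall hright)
  obtain ⟨v, hv, hMv⟩ := hPSD.exists_mulVec_eq_zero_of_not_posDef hnotPD
  exact hkernel _ ⟨ht₁.1, ht₁b⟩ hright v hv hMv

end Matrix

variable {n m k : Type*} [Fintype n] [Fintype m] [Fintype k]

lemma HasDerivWithinAt.dotProduct_mulVec {P : ℝ → Matrix n n ℝ} {P' : Matrix n n ℝ} {s : Set ℝ}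
    {t : ℝ} (h : HasDerivWithinAt P P' s t) (v : n → ℝ) :
    HasDerivWithinAt (fun t => v ⬝ᵥ P t *ᵥ v) (v ⬝ᵥ P' *ᵥ v) s t :=
  let L : Matrix n n ℝ →ₗ[ℝ] ℝ :=
    { toFun := fun M => v ⬝ᵥ M *ᵥ v
      map_add' := fun M N => by simp [add_mulVec, dotProduct_add]
      map_smul' := fun c M => by simp [smul_mulVec, dotProduct_smul] }
  L.toContinuousLinearMap.hasFDerivAt.comp_hasDerivWithinAt t h

lemma HasDerivWithinAt.nonneg_of_isMinOn_Icc {f : ℝ → ℝ} {f' a b : ℝ} (hab : a < b)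
    (hf : HasDerivWithinAt f f' (Icc a b) a) (hmin : IsMinOn f (Icc a b) a) : 0 ≤ f' := by
  have hcone : (1 : ℝ) ∈ posTangentConeAt (Icc a b) a :=
    one_mem_posTangentConeAt_iff_frequently.2
      (Filter.Eventually.frequently (mem_of_superset (Ioo_mem_nhdsGT hab) Ioo_subset_Icc_self))
  simpa using hmin.localize.hasFDerivWithinAt_nonneg hf.hasFDerivWithinAt hcone

lemma dotProduct_riccati_mulVec_of_mulVec_eq_smul (A : Matrix n n ℝ) (B : Matrix n m ℝ)
    (C : Matrix k n ℝ) (Q : Matrix m m ℝ) {P : Matrix n n ℝ} (hP : Pᵀ = P) {v : n → ℝ} {μ : ℝ}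
    (hv : P *ᵥ v = μ • v) :
    v ⬝ᵥ (Aᵀ * P + P * A + Cᵀ * C - P * B * Q * Bᵀ * P) *ᵥ v
      = 2 * μ * (v ⬝ᵥ A *ᵥ v) + (C *ᵥ v) ⬝ᵥ (C *ᵥ v) - μ ^ 2 * (v ⬝ᵥ (B * Q * Bᵀ) *ᵥ v) := by
  have hvP : v ᵥ* P = μ • v := by rw [← mulVec_transpose, hP, hv]
  have hAT : v ⬝ᵥ Aᵀ *ᵥ v = v ⬝ᵥ A *ᵥ v := by
    rw [dotProduct_mulVec, vecMul_transpose, dotProduct_comm]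
  have hCT : v ⬝ᵥ Cᵀ *ᵥ C *ᵥ v = (C *ᵥ v) ⬝ᵥ (C *ᵥ v) := by
    rw [dotProduct_mulVec, vecMul_transpose]
  simp only [add_mulVec, sub_mulVec, ← mulVec_mulVec, dotProduct_add, dotProduct_sub, hv,
    mulVec_smul, dotProduct_smul, dotProduct_mulVec v P, hvP, smul_dotProduct, smul_eq_mul]
  rw [hAT, hCT]
  ring

lemma riccati_sub_barrier_mulVec_ne_zero [DecidableEq n] {A : Matrix n n ℝ} {B : Matrix n m ℝ}
    {C : Matrix k n ℝ} {Q : Matrix m m ℝ} {P : ℝ → Matrix n n ℝ} {β : ℝ → ℝ} {β' t T : ℝ}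
    (htT : t < T) (hsymm : (P t)ᵀ = P t)
    (hP : HasDerivWithinAt P (-(Aᵀ * P t + P t * A + Cᵀ * C - P t * B * Q * Bᵀ * P t))
      (Icc t T) t)
    (hβ : HasDerivWithinAt β β' (Icc t T) t) (hβ0 : 0 ≤ β t)
    (hgap : β t * (2 * ∑ i, ∑ j, |A i j| + β t * ∑ i, ∑ j, |(B * Q * Bᵀ) i j|) < β')
    (hright : ∀ s ∈ Ioc t T, (P s - β s • 1).PosSemidef) {v : n → ℝ} (hv : v ≠ 0) :
    (P t - β t • 1) *ᵥ v ≠ 0 := by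
  intro hker
  have hquad : ∀ s, v ⬝ᵥ (P s - β s • 1) *ᵥ v = v ⬝ᵥ P s *ᵥ v - β s * (v ⬝ᵥ v) := fun s => by
    rw [sub_mulVec, smul_mulVec, one_mulVec, dotProduct_sub, dotProduct_smul, smul_eq_mul]
  have hPv : P t *ᵥ v = β t • v := by
    rwa [sub_mulVec, smul_mulVec, one_mulVec, sub_eq_zero] at hker
  have hmin : IsMinOn (fun s => v ⬝ᵥ P s *ᵥ v - β s * (v ⬝ᵥ v)) (Icc t T) t := by
    refine isMinOn_iff.2 fun s (hs : s ∈ Icc t T) => ?_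
    rcases hs.1.eq_or_lt with rfl | hts
    · exact le_rfl
    · simpa [← hquad, hker] using (hright s ⟨hts, hs.2⟩).dotProduct_mulVec_nonneg v
  have hderiv := ((hP.dotProduct_mulVec v).sub (hβ.mul_const (v ⬝ᵥ v))).nonneg_of_isMinOn_Icc
    htT hmin
  rw [neg_mulVec, dotProduct_neg, dotProduct_riccati_mulVec_of_mulVec_eq_smul A B C Q hsymm hPv]
    at hderiv
  have hvv : 0 < v ⬝ᵥ v := by simpa using dotProduct_self_star_pos_iff.2 hv
  have hA := abs_le.1 (abs_dotProduct_mulVec_le A v)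
  have hG := abs_le.1 (abs_dotProduct_mulVec_le (B * Q * Bᵀ) v)
  have hC : 0 ≤ (C *ᵥ v) ⬝ᵥ (C *ᵥ v) := by simpa using dotProduct_star_self_nonneg (C *ᵥ v)
  nlinarith [mul_le_mul_of_nonneg_left hA.1 hβ0]

theorem stmt16_general {d m k : ℕ} (T : ℝ)
    (A : Matrix (Fin d) (Fin d) ℝ) (B : Matrix (Fin d) (Fin m) ℝ)
    (C : Matrix (Fin k) (Fin d) ℝ) (R : Matrix (Fin m) (Fin m) ℝ)
    (P : ℝ → Matrix (Fin d) (Fin d) ℝ)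
    (hPsymm : ∀ t ∈ Icc (0 : ℝ) T, (P t).IsSymm)
    (hPode : ∀ t ∈ Icc (0 : ℝ) T,
      HasDerivWithinAt P
        (-(Aᵀ * P t + P t * A + Cᵀ * C - P t * B * R⁻¹ * Bᵀ * P t)) (Icc (0 : ℝ) T) t)
    (hPT : (P T).PosDef) :
    ∀ t ∈ Icc (0 : ℝ) T, (P t).PosDef := by
  obtain ⟨ε, hε, hεT⟩ := hPT.exists_posDef_sub_smul_one
  set a := ∑ i, ∑ j, |A i j|
  set c := ∑ i, ∑ j, |(B * R⁻¹ * Bᵀ) i j|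
  set K := 2 * a + ε * c + 1
  set β : ℝ → ℝ := fun t => ε * Real.exp (K * (t - T))
  have hβ_pos : ∀ t, 0 < β t := fun t => by positivity
  have hβ_le : ∀ t ≤ T, β t ≤ ε := fun t ht =>
    mul_le_of_le_one_right hε.le (Real.exp_le_one_iff.2 (mul_nonpos_of_nonneg_of_nonpos
      (by positivity) (sub_nonpos.2 ht)))
  have hβ_deriv : ∀ t, HasDerivAt β (K * β t) t := fun t =>
    ((((hasDerivAt_id' t).sub_const T).const_mul K).exp.const_mul ε).congr_deriv (by ring)
  have hPSD : ∀ t ∈ Icc (0 : ℝ) T, (P t - β t • 1).PosSemidef := by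
    refine Matrix.posSemidef_Icc_of_posDef_right ?_ ?_ (by simpa [β] using hεT) ?_
    · exact fun t ht => (hPode t ht).continuousWithinAt.sub
        ((hβ_deriv t).continuousAt.continuousWithinAt.smul continuousWithinAt_const)
    · exact fun t ht => (isHermitian_iff_isSymm.2 (hPsymm t ht)).sub_smul_one _
    · intro t ht hright v hv
      refine riccati_sub_barrier_mulVec_ne_zero ht.2 (hPsymm t ⟨ht.1, ht.2.le⟩)
        ((hPode t ⟨ht.1, ht.2.le⟩).mono (Icc_subset_Icc ht.1 le_rfl))
        (hβ_deriv t).hasDerivWithinAt (hβ_pos t).le ?_ hright hv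
      have hβc : β t * c ≤ ε * c := mul_le_mul_of_nonneg_right (hβ_le t ht.2.le) (by positivity)
      nlinarith [hβ_pos t]
  intro t ht
  simpa using PosDef.posSemidef_add (hPSD t ht) (PosDef.one.smul (hβ_pos t))

/-- If `P : [0,T] → ℝ^{d×d}` is differentiable with each `P t` symmetric and
solves the backward DRE `-dP/dt = AᵀP + PA + CᵀC - PBR⁻¹BᵀP` on `[0,T]` with symmetric positive
definite terminal value `P T`, then `P t` is positive definite for every `t ∈ [0,T]`. -/
theorem stmt16 {d m k : ℕ} (T : ℝ) (hT : 0 < T)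
    (A : Matrix (Fin d) (Fin d) ℝ) (B : Matrix (Fin d) (Fin m) ℝ)
    (C : Matrix (Fin k) (Fin d) ℝ) (R : Matrix (Fin m) (Fin m) ℝ) (hR : R.PosDef)
    (P : ℝ → Matrix (Fin d) (Fin d) ℝ)
    (hPsymm : ∀ t ∈ Icc (0 : ℝ) T, (P t).IsSymm)
    (hPode : ∀ t ∈ Icc (0 : ℝ) T,
      HasDerivWithinAt P
        (-(Aᵀ * P t + P t * A + Cᵀ * C - P t * B * R⁻¹ * Bᵀ * P t)) (Icc (0 : ℝ) T) t)
    (hPT : (P T).PosDef) :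
    ∀ t ∈ Icc (0 : ℝ) T, (P t).PosDef :=
  stmt16_general T A B C R P hPsymm hPode hPT
end
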